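/- Let X be a standard semilinear set in R^n and define X(0) = X and X(j) = cl(X(j−1)) − X(j−1) for j ≥ 1. Then for every j: cl(X(j)) is the disjoint union of X(j) and X(j+1); X(j) ⊃ X(j+2); X(j) − X(j+2) is the set of inner points of X(j) in cl(X(j)); and X(2j) is standard. -/

import Mathlib

open Set Topology

/-- `Rn R n` is the model of the affine space `R^n`. -/
abbrev Rn (R : Type*) (n : ℕ) : Type _ := Fin n → R

/-- The graph of `f` restricted to `X`, as a subset of `R^(a+b)`. -/
def mapGraph {R : Type*} {a b : ℕ} (f : Rn R a → Rn R b) (X : Set (Rn R a)) :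
    Set (Rn R (a + b)) :=
  {z | ∃ x ∈ X, z = Fin.append x (f x)}

/-- The graph of an `R`-valued function restricted to `X`, as a subset of `R^(a+1)`. -/
def funGraph {R : Type*} {a : ℕ} (f : Rn R a → R) (X : Set (Rn R a)) :
    Set (Rn R (a + 1)) :=
  {z | ∃ x ∈ X, z = Fin.snoc x (f x)}

/-- `f` is a homeomorphism from `X` onto `Y`. -/
def IsHomeoOn {α β : Type*} [TopologicalSpace α] [TopologicalSpace β]
    (f : α → β) (X : Set α) (Y : Set β) : Prop :=
  Set.BijOn f X Y ∧ ContinuousOn f X ∧ ∃ g : β → α, Set.InvOn g f X Y ∧ ContinuousOn g Y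

section LOF

variable {R : Type*} [Field R] [LinearOrder R] [IsStrictOrderedRing R]

/-- Bounded subset of `R^n`. -/
def IsBoundedSet {n : ℕ} (A : Set (Rn R n)) : Prop :=
  ∃ c : R, ∀ x ∈ A, ∀ i, |x i| ≤ c

/-- A basic semilinear set: finitely many affine equalities and strict inequalities. -/
def IsSemilinearBasic {n : ℕ} (A : Set (Rn R n)) : Prop :=
  ∃ l0 l1 : List (Rn R n →ᵃ[R] R),
    A = {x | (∀ f ∈ l0, f x = 0) ∧ (∀ f ∈ l1, 0 < f x)}

/-- A semilinear set: a finite union of basic semilinear sets. -/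
def IsSemilinear {n : ℕ} (A : Set (Rn R n)) : Prop :=
  ∃ l : List (Set (Rn R n)), (∀ B ∈ l, IsSemilinearBasic B) ∧ A = {x | ∃ B ∈ l, x ∈ B}

/-- A cell in `R^n`: a bounded set defined by affine equalities and weak inequalities. -/
def IsCell {n : ℕ} (σ : Set (Rn R n)) : Prop :=
  IsBoundedSet σ ∧ ∃ l0 l1 : List (Rn R n →ᵃ[R] R),
    σ = {x | (∀ f ∈ l0, f x = 0) ∧ (∀ f ∈ l1, 0 ≤ f x)}

/-- `τ` is a (nonempty) face of the cell `σ`. -/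
def IsFaceOf {n : ℕ} (τ σ : Set (Rn R n)) : Prop :=
  IsExtreme R σ τ ∧ IsCell τ ∧ τ.Nonempty

/-- The boundary `∂σ` of a cell: union of its proper faces. -/
def cellBoundary {n : ℕ} (σ : Set (Rn R n)) : Set (Rn R n) :=
  ⋃₀ {τ | IsFaceOf τ σ ∧ τ ≠ σ}

/-- The (open) interior `Int σ` of a cell. -/
def cellInterior {n : ℕ} (σ : Set (Rn R n)) : Set (Rn R n) :=
  σ \ cellBoundary σ

/-- A simplex in `R^n`: convex hull of affinely independent points. -/
def IsSimplex {n : ℕ} (s : Set (Rn R n)) : Prop :=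
  ∃ (k : ℕ) (v : Fin (k + 1) → Rn R n),
    AffineIndependent R v ∧ s = convexHull R (Set.range v)

/-- A compact polyhedron in `R^n`: a finite union of simplexes. -/
def IsCompactPolyhedron {n : ℕ} (P : Set (Rn R n)) : Prop :=
  ∃ l : List (Set (Rn R n)), (∀ s ∈ l, IsSimplex s) ∧ P = {x | ∃ s ∈ l, x ∈ s}

/-- The open simplex spanned by the affinely independent family `v`. -/
def SimplexInterior {n k : ℕ} (v : Fin (k + 1) → Rn R n) : Set (Rn R n) :=
  {x | ∃ w : Fin (k + 1) → R, (∀ i, 0 < w i) ∧ (∑ i, w i) = 1 ∧ x = ∑ i, w i • v i}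

/-- A finite cell complex in `R^n`. -/
def IsCellComplex {n : ℕ} (K : Set (Set (Rn R n))) : Prop :=
  K.Finite ∧ (∀ σ ∈ K, IsCell σ ∧ σ.Nonempty) ∧
    (∀ σ ∈ K, ∀ τ : Set (Rn R n), IsFaceOf τ σ → τ ∈ K) ∧
    (∀ σ ∈ K, ∀ τ ∈ K, (σ ∩ τ).Nonempty → IsFaceOf (σ ∩ τ) σ ∧ IsFaceOf (σ ∩ τ) τ)

/-- A finite simplicial complex in `R^n`. -/
def IsSimplicialComplex {n : ℕ} (K : Set (Set (Rn R n))) : Prop :=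
  IsCellComplex K ∧ ∀ σ ∈ K, IsSimplex σ

/-- The cone with vertex `v` and base `A`. -/
def coneSet {n : ℕ} (v : Rn R n) (A : Set (Rn R n)) : Set (Rn R n) :=
  convexHull R ({v} ∪ A)

/-- `K'` is a simplicial subdivision of `K`. -/
def IsSubdivisionOf {n : ℕ} (K' K : Set (Set (Rn R n))) : Prop :=
  IsSimplicialComplex K' ∧ ⋃₀ K' = ⋃₀ K ∧ ∀ τ ∈ K', ∃ σ ∈ K, τ ⊆ σ

/-- `K'` is a derived subdivision of `K`. -/
def IsDerivedSubdivisionOf {n : ℕ} (K' K : Set (Set (Rn R n))) : Prop :=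
  IsSubdivisionOf K' K ∧ ∀ σ ∈ K, ∃ v ∈ cellInterior σ,
    {τ ∈ K' | τ ⊆ σ} = {τ ∈ K' | τ ⊆ cellBoundary σ} ∪
      (coneSet v '' {τ ∈ K' | τ ⊆ cellBoundary σ}) ∪ {{v}}

/-- `v` is the barycenter of `σ` (the centroid of its extreme points). -/
def IsBarycenterOf {n : ℕ} (v : Rn R n) (σ : Set (Rn R n)) : Prop :=
  ∃ s : Finset (Rn R n), ↑s = Set.extremePoints R σ ∧ s.Nonempty ∧
    v = (s.card : R)⁻¹ • ∑ x ∈ s, x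

/-- `K'` is a barycentric subdivision of `K`. -/
def IsBarycentricSubdivisionOf {n : ℕ} (K' K : Set (Set (Rn R n))) : Prop :=
  IsSubdivisionOf K' K ∧ ∀ σ ∈ K, ∃ v, IsBarycenterOf v σ ∧ v ∈ cellInterior σ ∧
    {τ ∈ K' | τ ⊆ σ} = {τ ∈ K' | τ ⊆ cellBoundary σ} ∪
      (coneSet v '' {τ ∈ K' | τ ⊆ cellBoundary σ}) ∪ {{v}}

/-- The union of the stars `|st(v,K)|` over all vertices `v` of `K` lying in `W`. -/
def starNbhd {n : ℕ} (K : Set (Set (Rn R n))) (W : Set (Rn R n)) : Set (Rn R n) :=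
  {x | ∃ v σ, {v} ∈ K ∧ v ∈ W ∧ σ ∈ K ∧ v ∈ σ ∧ x ∈ σ}

/-- The graph of a two-parameter map `(x,t) ↦ F x t`, `t ∈ [0,1]`, `x ∈ X`,
as a subset of `R^(n+1+b)`. -/
def isotGraph {n b : ℕ} (F : Rn R n → R → Rn R b) (X : Set (Rn R n)) :
    Set (Rn R (n + 1 + b)) :=
  {z | ∃ x ∈ X, ∃ t ∈ Set.Icc (0 : R) 1, z = Fin.append (Fin.snoc x t) (F x t)}

/-- Open intervals of `R`, with possibly infinite endpoints. -/
def IsOpenIntervalSet (J : Set R) : Prop :=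
  (∃ a b : R, J = Set.Ioo a b) ∨ (∃ a : R, J = Set.Ioi a) ∨ (∃ b : R, J = Set.Iio b) ∨
    J = Set.univ

/-- A finite union of points and open intervals. -/
def IsPointsAndIntervals (A : Set R) : Prop :=
  ∃ (P : List R) (I : List (Set R)), (∀ J ∈ I, IsOpenIntervalSet J) ∧
    A = {x | x ∈ P ∨ ∃ J ∈ I, x ∈ J}

end LOF

/-- An o-minimal structure over an ordered field `R`, satisfying in addition the
strengthened axiom that every algebraic subset of `R^n` is definable. -/
structure OMinStructure (R : Type*) [Field R] [LinearOrder R] [IsStrictOrderedRing R] where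
  S : ∀ n : ℕ, Set (Set (Rn R n))
  union_mem : ∀ n, ∀ A ∈ S n, ∀ B ∈ S n, A ∪ B ∈ S n
  compl_mem : ∀ n, ∀ A ∈ S n, Aᶜ ∈ S n
  prod_left_mem : ∀ n, ∀ A ∈ S n, {z : Rn R (n + 1) | Fin.tail z ∈ A} ∈ S (n + 1)
  prod_right_mem : ∀ n, ∀ A ∈ S n, {z : Rn R (n + 1) | Fin.init z ∈ A} ∈ S (n + 1)
  linear_mem : ∀ n (V : Submodule R (Rn R n)), (V : Set (Rn R n)) ∈ S n
  alg_mem : ∀ n (l : List (MvPolynomial (Fin n) R)),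
    {x : Rn R n | ∀ p ∈ l, MvPolynomial.eval x p = 0} ∈ S n
  lt_mem : {z : Rn R 2 | z 0 < z 1} ∈ S 2
  proj_mem : ∀ n, ∀ A ∈ S (n + 1), (fun z : Rn R (n + 1) => Fin.init z) '' A ∈ S n
  omin : ∀ A ∈ S 1, IsPointsAndIntervals {x : R | (fun _ : Fin 1 => x) ∈ A}

section TopLOF

variable {R : Type*} [Field R] [LinearOrder R] [IsStrictOrderedRing R] [TopologicalSpace R] [OrderTopology R]

/-- A PL homeomorphism from `X` onto `Y`. -/
def IsPLHomeo {a b : ℕ} (f : Rn R a → Rn R b) (X : Set (Rn R a)) (Y : Set (Rn R b)) : Prop :=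
  IsHomeoOn f X Y ∧ IsCompactPolyhedron (mapGraph f X)

/-- A compact PL manifold: a compact polyhedron each point of which has a compact
polyhedral neighborhood PL homeomorphic to a `d`-simplex, with the point going to an
interior point of the simplex. -/
def IsCompactPLManifold {n : ℕ} (M : Set (Rn R n)) : Prop :=
  IsCompactPolyhedron M ∧ ∃ d : ℕ, ∀ x ∈ M,
    ∃ (U : Set (Rn R n)) (v : Fin (d + 1) → Rn R d) (f : Rn R n → Rn R d),
      IsCompactPolyhedron U ∧ U ⊆ M ∧ U ∈ 𝓝[M] x ∧ AffineIndependent R v ∧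
      IsPLHomeo f U (convexHull R (Set.range v)) ∧ f x ∈ SimplexInterior v

/-- A compact PL manifold with boundary: a compact polyhedron each point of which has a
compact polyhedral neighborhood PL homeomorphic to a `d`-simplex. -/
def IsCompactPLManifoldWithBoundary {n : ℕ} (M : Set (Rn R n)) : Prop :=
  IsCompactPolyhedron M ∧ ∃ d : ℕ, ∀ x ∈ M,
    ∃ (U : Set (Rn R n)) (v : Fin (d + 1) → Rn R d) (f : Rn R n → Rn R d),
      IsCompactPolyhedron U ∧ U ⊆ M ∧ U ∈ 𝓝[M] x ∧ AffineIndependent R v ∧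
      IsPLHomeo f U (convexHull R (Set.range v))

/-- The interior of a compact PL manifold with boundary: the set of points having a
chart onto a simplex sending the point to an interior point. -/
def PLManifoldInterior {n : ℕ} (M : Set (Rn R n)) : Set (Rn R n) :=
  {x ∈ M | ∃ (d : ℕ) (U : Set (Rn R n)) (v : Fin (d + 1) → Rn R d) (f : Rn R n → Rn R d),
    IsCompactPolyhedron U ∧ U ⊆ M ∧ U ∈ 𝓝[M] x ∧ AffineIndependent R v ∧
    IsPLHomeo f U (convexHull R (Set.range v)) ∧ f x ∈ SimplexInterior v}

/-- `φ` is a (semilinear) collar on `A` in `B`: a semilinear `C⁰` embedding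
`A × [0,1] → B` with `φ(·,0) = id` whose image of `A × [0,1)` is an open
neighborhood of `A` in `B`. -/
def IsCollarOn {n : ℕ} (φ : Rn R n → R → Rn R n) (A B : Set (Rn R n)) : Prop :=
  Set.MapsTo (fun p : Rn R n × R => φ p.1 p.2) (A ×ˢ Set.Icc (0 : R) 1) B ∧
  ContinuousOn (fun p : Rn R n × R => φ p.1 p.2) (A ×ˢ Set.Icc (0 : R) 1) ∧
  Set.InjOn (fun p : Rn R n × R => φ p.1 p.2) (A ×ˢ Set.Icc (0 : R) 1) ∧
  (∃ ψ : Rn R n → Rn R n × R,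
    ContinuousOn ψ ((fun p : Rn R n × R => φ p.1 p.2) '' (A ×ˢ Set.Icc (0 : R) 1)) ∧
    ∀ p ∈ A ×ˢ Set.Icc (0 : R) 1, ψ (φ p.1 p.2) = p) ∧
  (∀ x ∈ A, φ x 0 = x) ∧
  IsSemilinear (isotGraph φ A) ∧
  (∃ V : Set (Rn R n), IsOpen V ∧
    (fun p : Rn R n × R => φ p.1 p.2) '' (A ×ˢ Set.Ico (0 : R) 1) = V ∩ B)

/-- A standard semilinear set. -/
def IsStandardSemilinear {n : ℕ} (X : Set (Rn R n)) : Prop :=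
  IsSemilinear X ∧ IsBoundedSet X ∧
    ∃ φ : Rn R n → R → Rn R n, IsCollarOn φ (closure X \ X) (closure X)

/-- A standard family of semilinear sets `(X; X_1, ..., X_k)`. -/
def IsStandardFamily {n k : ℕ} (X : Set (Rn R n)) (Xi : Fin k → Set (Rn R n)) : Prop :=
  IsSemilinear X ∧ (∀ i, IsSemilinear (Xi i)) ∧ (∀ i, Xi i ⊆ X) ∧ IsBoundedSet X ∧
  ∃ φ : Rn R n → R → Rn R n, IsCollarOn φ (closure X \ X) (closure X) ∧
    ∀ i, ∃ X' : Set (Rn R n), IsSemilinear X' ∧ X' ⊆ closure X \ X ∧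
      ∀ x ∈ closure X \ X, ∀ t ∈ Set.Icc (0 : R) 1, (φ x t ∈ Xi i ↔ x ∈ X' ∧ 0 < t)

/-- A definable isotopy of `X`: a definable `C⁰` map `F : X × [0,1] → X` with
`F(·,0) = id` and each `F(·,t)` a homeomorphism of `X`. -/
def IsDefinableIsotopy (𝒮 : OMinStructure R) {n : ℕ}
    (F : Rn R n → R → Rn R n) (X : Set (Rn R n)) : Prop :=
  ContinuousOn (fun p : Rn R n × R => F p.1 p.2) (X ×ˢ Set.Icc (0 : R) 1) ∧
  (∀ x ∈ X, F x 0 = x) ∧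
  (∀ t ∈ Set.Icc (0 : R) 1, IsHomeoOn (fun x => F x t) X X) ∧
  isotGraph F X ∈ 𝒮.S (n + 1 + n)

/-- A definable `C⁰` manifold: a definable set with a definable atlas. -/
def IsDefinableManifold (𝒮 : OMinStructure R) {m : ℕ} (M : Set (Rn R m)) : Prop :=
  M ∈ 𝒮.S m ∧ ∃ d : ℕ, ∀ x ∈ M, ∃ (U : Set (Rn R m)) (ψ : Rn R m → Rn R d),
    x ∈ U ∧ (∃ V : Set (Rn R m), IsOpen V ∧ U = V ∩ M) ∧ U ∈ 𝒮.S m ∧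
    IsHomeoOn ψ U (ψ '' U) ∧ IsOpen (ψ '' U) ∧ mapGraph ψ U ∈ 𝒮.S (m + d)

/-- A cellular map between finite cell complexes: continuous on `|K|`, affine on
each cell and sending each cell of `K` onto a cell of `M`. -/
def IsCellularMap {a b : ℕ} (K : Set (Set (Rn R a))) (M : Set (Set (Rn R b)))
    (γ : Rn R a → Rn R b) : Prop :=
  ContinuousOn γ (⋃₀ K) ∧ Set.MapsTo γ (⋃₀ K) (⋃₀ M) ∧
    ∀ σ ∈ K, ∃ τ ∈ M, γ '' σ = τ ∧ ∃ g : Rn R a →ᵃ[R] Rn R b, Set.EqOn γ g σ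

end TopLOF

/-- A structure over `ℝ` closed under the boolean and projection operations,
containing linear subspaces and the order relation (no algebraic-sets axiom). -/
structure RealStructure where
  S : ∀ n : ℕ, Set (Set (Rn ℝ n))
  union_mem : ∀ n, ∀ A ∈ S n, ∀ B ∈ S n, A ∪ B ∈ S n
  compl_mem : ∀ n, ∀ A ∈ S n, Aᶜ ∈ S n
  prod_left_mem : ∀ n, ∀ A ∈ S n, {z : Rn ℝ (n + 1) | Fin.tail z ∈ A} ∈ S (n + 1)
  prod_right_mem : ∀ n, ∀ A ∈ S n, {z : Rn ℝ (n + 1) | Fin.init z ∈ A} ∈ S (n + 1)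
  linear_mem : ∀ n (V : Submodule ℝ (Rn ℝ n)), (V : Set (Rn ℝ n)) ∈ S n
  lt_mem : {z : Rn ℝ 2 | z 0 < z 1} ∈ S 2
  proj_mem : ∀ n, ∀ A ∈ S (n + 1), (fun z : Rn ℝ (n + 1) => Fin.init z) '' A ∈ S n

/-- A structure over `ℝ` which in addition contains every algebraic set. -/
structure RealStructureAlg extends RealStructure where
  alg_mem : ∀ n (l : List (MvPolynomial (Fin n) ℝ)),
    {x : Rn ℝ n | ∀ p ∈ l, MvPolynomial.eval x p = 0} ∈ S n

/-- `S_n(X)`: the smallest structure over `ℝ` containing `X`. -/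
def SFam {m : ℕ} (X : Set (Rn ℝ m)) (n : ℕ) : Set (Set (Rn ℝ n)) :=
  {A | ∀ 𝒮 : RealStructure, X ∈ 𝒮.S m → A ∈ 𝒮.S n}

/-- `S_n(X)`: the smallest structure over `ℝ` containing `X` and all algebraic sets. -/
def SFamAlg {m : ℕ} (X : Set (Rn ℝ m)) (n : ℕ) : Set (Set (Rn ℝ n)) :=
  {A | ∀ 𝒮 : RealStructureAlg, X ∈ 𝒮.S m → A ∈ 𝒮.S n}

/-- `A` has only finitely many connected components. -/
def HasFinitelyManyComponents {α : Type*} [TopologicalSpace α] (A : Set α) : Prop :=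
  {C : Set α | ∃ x ∈ A, C = connectedComponentIn A x}.Finite

/-- `X ⊆ ℝ^m` is tame (without the algebraic-sets axiom). -/
def IsTame {m : ℕ} (X : Set (Rn ℝ m)) : Prop :=
  ∀ A ∈ SFam X 1, HasFinitelyManyComponents A

/-- `X ⊆ ℝ^m` is tame (with the algebraic-sets axiom). -/
def IsTameAlg {m : ℕ} (X : Set (Rn ℝ m)) : Prop :=
  ∀ A ∈ SFamAlg X 1, HasFinitelyManyComponents A

/-- A structure over `ℝ` is o-minimal if every set in `S 1` is a finite union of
points and open intervals. -/
def IsOMinimalReal (𝒮 : RealStructure) : Prop :=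
  ∀ A ∈ 𝒮.S 1, IsPointsAndIntervals {x : ℝ | (fun _ : Fin 1 => x) ∈ A}

/-- A tame `C⁰` manifold: a tame set which is a topological manifold with a tame atlas. -/
def IsTameC0Manifold {m : ℕ} (X : Set (Rn ℝ m)) : Prop :=
  IsTameAlg X ∧ ∃ d : ℕ, ∀ x ∈ X, ∃ (U : Set (Rn ℝ m)) (ψ : Rn ℝ m → Rn ℝ d),
    x ∈ U ∧ (∃ V : Set (Rn ℝ m), IsOpen V ∧ U = V ∩ X) ∧
    IsHomeoOn ψ U (ψ '' U) ∧ IsOpen (ψ '' U) ∧ IsTameAlg (mapGraph ψ U)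


/-! Semilinear sets are closed under boolean operations and closure: the only nontrivial point
is that a nonempty basic set `{f = 0, g > 0}` is dense in `{f = 0, g ≥ 0}`, by moving towards
one of its points along a segment. A collar makes `cl X − X` open in its closure, hence
`X(2) = cl X(1) − X(1)` is closed; so `X(j) = ∅` for `j ≥ 3`, and the remaining assertions are
point-set topology. -/

section Semilinear

variable {R : Type*} [Field R] [LinearOrder R] {n : ℕ}

theorem IsSemilinearBasic.isSemilinear {A : Set (Rn R n)} (h : IsSemilinearBasic A) :
    IsSemilinear A :=
  ⟨[A], by simpa using h, by simp⟩

theorem IsSemilinearBasic.inter {A B : Set (Rn R n)} (hA : IsSemilinearBasic A)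
    (hB : IsSemilinearBasic B) : IsSemilinearBasic (A ∩ B) := by
  obtain ⟨a0, a1, rfl⟩ := hA
  obtain ⟨b0, b1, rfl⟩ := hB
  refine ⟨a0 ++ b0, a1 ++ b1, ?_⟩
  ext x
  simp only [mem_inter_iff, mem_ofPred_eq, List.mem_append, or_imp, forall_and]
  tauto

theorem isSemilinearBasic_zero_lt (f : Rn R n →ᵃ[R] R) :
    IsSemilinearBasic {x : Rn R n | 0 < f x} :=
  ⟨[], [f], by simp⟩

theorem isSemilinearBasic_eq_zero (f : Rn R n →ᵃ[R] R) :
    IsSemilinearBasic {x : Rn R n | f x = 0} :=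
  ⟨[f], [], by simp⟩

theorem isSemilinear_iff_biUnion {A : Set (Rn R n)} : IsSemilinear A ↔
    ∃ l : List (Set (Rn R n)), (∀ B ∈ l, IsSemilinearBasic B) ∧ A = ⋃ B ∈ l, B := by
  simp only [IsSemilinear, Set.ext_iff, mem_ofPred_eq, mem_iUnion, exists_prop]

namespace IsSemilinear

theorem empty : IsSemilinear (∅ : Set (Rn R n)) :=
  ⟨[], by simp, by simp⟩

theorem univ : IsSemilinear (univ : Set (Rn R n)) :=
  IsSemilinearBasic.isSemilinear ⟨[], [], by simp⟩

theorem union {A B : Set (Rn R n)} (hA : IsSemilinear A) (hB : IsSemilinear B) :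
    IsSemilinear (A ∪ B) := by
  obtain ⟨la, hla, rfl⟩ := hA
  obtain ⟨lb, hlb, rfl⟩ := hB
  refine ⟨la ++ lb, fun C hC => (List.mem_append.mp hC).elim (hla C) (hlb C), ?_⟩
  ext x
  simp only [mem_union, mem_ofPred_eq, List.mem_append, or_and_right, exists_or]

theorem biUnion_list {ι : Type*} {l : List ι} {s : ι → Set (Rn R n)}
    (h : ∀ i ∈ l, IsSemilinear (s i)) : IsSemilinear (⋃ i ∈ l, s i) := by
  induction l with
  | nil => simpa using empty
  | cons i l ih =>
    simp only [List.mem_cons, iUnion_iUnion_eq_or_left]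
    exact (h i (by simp)).union (ih fun j hj => h j (by simp [hj]))

theorem inter {A B : Set (Rn R n)} (hA : IsSemilinear A) (hB : IsSemilinear B) :
    IsSemilinear (A ∩ B) := by
  obtain ⟨la, hla, rfl⟩ := isSemilinear_iff_biUnion.mp hA
  obtain ⟨lb, hlb, rfl⟩ := isSemilinear_iff_biUnion.mp hB
  simp only [iUnion₂_inter, inter_iUnion₂]
  exact biUnion_list fun B hB => biUnion_list fun A hA =>
    ((hla A hA).inter (hlb B hB)).isSemilinear

theorem biInter_list {ι : Type*} {l : List ι} {s : ι → Set (Rn R n)}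
    (h : ∀ i ∈ l, IsSemilinear (s i)) : IsSemilinear (⋂ i ∈ l, s i) := by
  induction l with
  | nil => simpa using univ
  | cons i l ih =>
    simp only [List.mem_cons, iInter_iInter_eq_or_left]
    exact (h i (by simp)).inter (ih fun j hj => h j (by simp [hj]))

end IsSemilinear

variable [IsStrictOrderedRing R]

theorem isSemilinear_ne_zero (f : Rn R n →ᵃ[R] R) : IsSemilinear {x : Rn R n | f x ≠ 0} := by
  have : {x : Rn R n | f x ≠ 0} = {x | 0 < f x} ∪ {x | 0 < (-f) x} := by
    ext x
    simp [lt_or_lt_iff_ne, eq_comm]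
  rw [this]
  exact (isSemilinearBasic_zero_lt f).isSemilinear.union (isSemilinearBasic_zero_lt _).isSemilinear

theorem isSemilinear_nonpos (f : Rn R n →ᵃ[R] R) : IsSemilinear {x : Rn R n | f x ≤ 0} := by
  have : {x : Rn R n | f x ≤ 0} = {x | f x = 0} ∪ {x | 0 < (-f) x} := by
    ext x
    simp [le_iff_lt_or_eq, or_comm]
  rw [this]
  exact (isSemilinearBasic_eq_zero f).isSemilinear.union (isSemilinearBasic_zero_lt _).isSemilinear

theorem IsSemilinearBasic.isSemilinear_compl {A : Set (Rn R n)} (h : IsSemilinearBasic A) :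
    IsSemilinear Aᶜ := by
  obtain ⟨l0, l1, rfl⟩ := h
  have : {x | (∀ f ∈ l0, f x = 0) ∧ (∀ f ∈ l1, 0 < f x)}ᶜ =
      (⋃ f ∈ l0, {x : Rn R n | f x ≠ 0}) ∪ ⋃ f ∈ l1, {x | f x ≤ 0} := by
    ext x
    simp [imp_iff_not_or]
  rw [this]
  exact (IsSemilinear.biUnion_list fun f _ => isSemilinear_ne_zero f).union
    (IsSemilinear.biUnion_list fun f _ => isSemilinear_nonpos f)

namespace IsSemilinear

theorem compl {A : Set (Rn R n)} (h : IsSemilinear A) : IsSemilinear Aᶜ := by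
  obtain ⟨l, hl, rfl⟩ := isSemilinear_iff_biUnion.mp h
  rw [compl_iUnion₂]
  exact biInter_list fun B hB => (hl B hB).isSemilinear_compl

theorem diff {A B : Set (Rn R n)} (hA : IsSemilinear A) (hB : IsSemilinear B) :
    IsSemilinear (A \ B) :=
  hA.inter hB.compl

end IsSemilinear

theorem isSemilinear_setOf_eq_zero_and_nonneg (l0 l1 : List (Rn R n →ᵃ[R] R)) :
    IsSemilinear {x | (∀ f ∈ l0, f x = 0) ∧ (∀ f ∈ l1, 0 ≤ f x)} := by
  have : {x | (∀ f ∈ l0, f x = 0) ∧ (∀ f ∈ l1, 0 ≤ f x)} =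
      (⋂ f ∈ l0, {x : Rn R n | f x = 0}) ∩ ⋂ f ∈ l1, {x | (-f) x ≤ 0} := by
    ext x
    simp
  rw [this]
  exact (IsSemilinear.biInter_list fun f _ => (isSemilinearBasic_eq_zero f).isSemilinear).inter
    (IsSemilinear.biInter_list fun f _ => isSemilinear_nonpos _)

end Semilinear

section Closure

variable {R : Type*} [Field R] [LinearOrder R] [IsStrictOrderedRing R] [TopologicalSpace R]
  [OrderTopology R] {n : ℕ}

theorem AffineMap.continuous_on_pi (f : Rn R n →ᵃ[R] R) : Continuous f := by
  rw [f.decomp]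
  exact f.linear.continuous_on_pi.add continuous_const

theorem isClosed_setOf_eq_zero_and_nonneg (l0 l1 : List (Rn R n →ᵃ[R] R)) :
    IsClosed {x | (∀ f ∈ l0, f x = 0) ∧ (∀ f ∈ l1, 0 ≤ f x)} := by
  simp only [ofPred_and, ofPred_forall]
  exact (isClosed_biInter fun f _ => isClosed_eq f.continuous_on_pi continuous_const).inter
    (isClosed_biInter fun f _ => isClosed_le continuous_const f.continuous_on_pi)

theorem closure_setOf_eq_zero_and_pos {l0 l1 : List (Rn R n →ᵃ[R] R)}
    (hne : {x | (∀ f ∈ l0, f x = 0) ∧ (∀ f ∈ l1, 0 < f x)}.Nonempty) :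
    closure {x | (∀ f ∈ l0, f x = 0) ∧ (∀ f ∈ l1, 0 < f x)} =
      {x | (∀ f ∈ l0, f x = 0) ∧ (∀ f ∈ l1, 0 ≤ f x)} := by
  refine Subset.antisymm (closure_minimal (fun x hx => ⟨hx.1, fun f hf => (hx.2 f hf).le⟩)
    (isClosed_setOf_eq_zero_and_nonneg l0 l1)) fun x ⟨hx0, hx1⟩ => ?_
  obtain ⟨c, hc0, hc1⟩ := hne
  have hlim : Filter.Tendsto (AffineMap.lineMap x c) (𝓝[>] (0 : R)) (𝓝 x) :=
    (AffineMap.lineMap_continuous.tendsto' 0 x (by simp)).mono_left nhdsWithin_le_nhds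
  refine mem_closure_of_tendsto hlim ?_
  filter_upwards [Ioc_mem_nhdsGT zero_lt_one] with t ⟨ht0, ht1⟩
  refine ⟨fun f hf => ?_, fun f hf => ?_⟩
  · simp [AffineMap.apply_lineMap, hx0 f hf, hc0 f hf]
  · rw [AffineMap.apply_lineMap, AffineMap.lineMap_apply_ring']
    nlinarith [hx1 f hf, hc1 f hf]

theorem IsSemilinearBasic.isSemilinear_closure {A : Set (Rn R n)} (h : IsSemilinearBasic A) :
    IsSemilinear (closure A) := by
  obtain ⟨l0, l1, rfl⟩ := h
  rcases eq_empty_or_nonempty {x | (∀ f ∈ l0, f x = 0) ∧ (∀ f ∈ l1, 0 < f x)} with he | hne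
  · rw [he, closure_empty]
    exact IsSemilinear.empty
  · rw [closure_setOf_eq_zero_and_pos hne]
    exact isSemilinear_setOf_eq_zero_and_nonneg l0 l1

theorem IsSemilinear.closure {A : Set (Rn R n)} (h : IsSemilinear A) :
    IsSemilinear (closure A) := by
  obtain ⟨l, hl, rfl⟩ := isSemilinear_iff_biUnion.mp h
  rw [show (⋃ B ∈ l, B) = ⋃ B ∈ {B | B ∈ l}, B from rfl, l.finite_toSet.closure_biUnion]
  exact IsSemilinear.biUnion_list fun B hB => (hl B hB).isSemilinear_closure

end Closure

section Bounded

variable {R : Type*} [Field R] [LinearOrder R] {n : ℕ}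

theorem IsBoundedSet.mono {A B : Set (Rn R n)} (hB : IsBoundedSet B) (hAB : A ⊆ B) :
    IsBoundedSet A :=
  let ⟨c, hc⟩ := hB
  ⟨c, fun x hx => hc x (hAB hx)⟩

variable [IsStrictOrderedRing R] [TopologicalSpace R] [OrderTopology R]

theorem IsBoundedSet.closure {A : Set (Rn R n)} (hA : IsBoundedSet A) :
    IsBoundedSet (closure A) := by
  obtain ⟨c, hc⟩ := hA
  have hclosed : IsClosed {x : Rn R n | ∀ i, |x i| ≤ c} := by
    simp only [ofPred_forall]
    exact isClosed_iInter fun i => isClosed_le (continuous_apply i).abs continuous_const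
  exact ⟨c, fun x hx => closure_minimal (fun y hy => hc y hy) hclosed hx⟩

end Bounded

section Collar

variable {R : Type*} [Field R] [LinearOrder R] [TopologicalSpace R] {n : ℕ}
  {φ : Rn R n → R → Rn R n} {A B : Set (Rn R n)}

theorem isCollarOn_empty : IsCollarOn (fun (x : Rn R n) (_ : R) => x) ∅ B := by
  have hgraph : isotGraph (fun (x : Rn R n) (_ : R) => x) ∅ = ∅ := by
    ext z
    simp [isotGraph]
  refine ⟨?_, ?_, ?_, ⟨fun y => (y, 0), ?_, ?_⟩, fun x _ => rfl, hgraph ▸ IsSemilinear.empty,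
    ∅, isOpen_empty, ?_⟩ <;> simp [mapsTo_empty]

variable [IsStrictOrderedRing R]

namespace IsCollarOn

theorem subset (h : IsCollarOn φ A B) : A ⊆ B := by
  obtain ⟨hmaps, -, -, -, hid, -⟩ := h
  intro a ha
  simpa [hid a ha] using hmaps (show (a, (0 : R)) ∈ A ×ˢ Icc 0 1 by simp [ha])

/-- The inverse `ψ` of the collar is continuous and equals `a ↦ (a, 0)` on `A`, so at a limit
point `w` of `A` it must equal `(w, 0)`. -/
theorem mem_of_mem_closure [T2Space R] (h : IsCollarOn φ A B) {w : Rn R n} (hw : w ∈ closure A)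
    (hwφ : w ∈ (fun p : Rn R n × R => φ p.1 p.2) '' (A ×ˢ Icc 0 1)) : w ∈ A := by
  obtain ⟨-, -, -, ⟨ψ, hψc, hψ⟩, hid, -⟩ := h
  obtain ⟨p, hp, rfl⟩ := hwφ
  have hAim : A ⊆ (fun p : Rn R n × R => φ p.1 p.2) '' (A ×ˢ Icc 0 1) := fun a ha =>
    ⟨(a, 0), by simp [ha], hid a ha⟩
  have hψA : ∀ a ∈ A, ψ a = (a, 0) := fun a ha => by
    simpa [hid a ha] using hψ (a, 0) (by simp [ha])
  have hlim : Filter.Tendsto (fun a => (a, (0 : R))) (𝓝[A] φ p.1 p.2) (𝓝 (ψ (φ p.1 p.2))) :=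
    ((hψc _ ⟨p, hp, rfl⟩).mono hAim).congr' (eventually_nhdsWithin_of_forall hψA)
  have hlim' : Filter.Tendsto (fun a => (a, (0 : R))) (𝓝[A] φ p.1 p.2) (𝓝 (φ p.1 p.2, 0)) :=
    (tendsto_nhdsWithin_of_tendsto_nhds Filter.tendsto_id).prodMk_nhds tendsto_const_nhds
  have := mem_closure_iff_nhdsWithin_neBot.mp hw
  have hp' : p = (φ p.1 p.2, 0) := (hψ p hp).symm.trans (tendsto_nhds_unique hlim hlim')
  have hp1 : p.1 = φ p.1 p.2 := congrArg Prod.fst hp'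
  show φ p.1 p.2 ∈ A
  exact hp1 ▸ hp.1

theorem isLocallyClosed [T2Space R] (h : IsCollarOn φ A B) (hB : IsClosed B) :
    IsLocallyClosed A := by
  obtain ⟨-, -, -, -, hid, -, V, hV, hVim⟩ := id h
  refine ⟨V, closure A, hV, isClosed_closure, subset_antisymm
    (subset_inter (fun a ha => ?_) subset_closure) fun w ⟨hwV, hwA⟩ => ?_⟩
  · have : a ∈ V ∩ B := hVim ▸ ⟨(a, 0), by simp [ha], hid a ha⟩
    exact this.1
  · have hw : w ∈ V ∩ B := ⟨hwV, closure_minimal h.subset hB hwA⟩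
    rw [← hVim] at hw
    obtain ⟨p, hp, rfl⟩ := hw
    exact h.mem_of_mem_closure hwA ⟨p, ⟨hp.1, hp.2.1, hp.2.2.le⟩, rfl⟩

end IsCollarOn

end Collar

theorem IsStandardSemilinear.of_isClosed {R : Type*} [Field R] [LinearOrder R]
    [TopologicalSpace R] {n : ℕ} {X : Set (Rn R n)} (hsl : IsSemilinear X)
    (hb : IsBoundedSet X) (hc : IsClosed X) : IsStandardSemilinear X :=
  ⟨hsl, hb, fun x _ => x, by rw [hc.closure_eq, sdiff_self]; exact isCollarOn_empty⟩

section Remainder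

variable {α : Type*} [TopologicalSpace α]

theorem closure_diff_self_closure_diff_self_subset (s : Set α) :
    closure (closure s \ s) \ (closure s \ s) ⊆ s := fun _ ⟨hx, hxs⟩ =>
  not_not.mp fun hx' => hxs ⟨isClosed_closure.closure_subset_iff.mpr sdiff_subset hx, hx'⟩

theorem mem_nhdsWithin_closure_iff_coborder_mem_nhds {s : Set α} {x : α} :
    s ∈ 𝓝[closure s] x ↔ coborder s ∈ 𝓝 x := by
  have : coborder s = {y | y ∈ closure s → y ∈ s} := by
    ext
    simp [coborder]
  rw [mem_nhdsWithin_iff_eventually, this]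
  rfl

theorem diff_closure_diff_self_closure_diff_self (s : Set α) :
    s \ (closure (closure s \ s) \ (closure s \ s)) = {x ∈ s | s ∈ 𝓝[closure s] x} := by
  ext x
  simp only [mem_sdiff, mem_sep_iff, mem_nhdsWithin_closure_iff_coborder_mem_nhds,
    ← mem_interior_iff_mem_nhds, coborder, interior_compl, mem_compl_iff]
  tauto

theorem IsLocallyClosed.isClosed_closure_diff_self {s : Set α} (hs : IsLocallyClosed s) :
    IsClosed (closure s \ s) :=
  isOpen_compl_iff.mp hs.isOpen_coborder

theorem isClosed_of_isClosed_of_le {Xs : ℕ → Set α}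
    (hrec : ∀ j, Xs (j + 1) = closure (Xs j) \ Xs j) {k m : ℕ} (hk : IsClosed (Xs k))
    (hkm : k ≤ m) : IsClosed (Xs m) := by
  induction m, hkm using Nat.le_induction with
  | base => exact hk
  | succ m _ ih => rw [hrec, ih.closure_eq, sdiff_self]; exact isClosed_empty

end Remainder

theorem statement_12 {R : Type*} [Field R] [LinearOrder R] [IsStrictOrderedRing R] [TopologicalSpace R] [OrderTopology R]
    {n : ℕ} (X : Set (Rn R n)) (hX : IsStandardSemilinear X)
    (Xs : ℕ → Set (Rn R n)) (h0 : Xs 0 = X)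
    (hrec : ∀ j, Xs (j + 1) = closure (Xs j) \ Xs j) :
    ∀ j : ℕ,
      (closure (Xs j) = Xs j ∪ Xs (j + 1) ∧ Disjoint (Xs j) (Xs (j + 1))) ∧
      Xs (j + 2) ⊆ Xs j ∧
      Xs j \ Xs (j + 2) = {x ∈ Xs j | Xs j ∈ 𝓝[closure (Xs j)] x} ∧
      IsStandardSemilinear (Xs (2 * j)) := by
  have hrec2 (j : ℕ) :
      Xs (j + 2) = closure (closure (Xs j) \ Xs j) \ (closure (Xs j) \ Xs j) := by
    rw [hrec (j + 1), hrec j]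
  have hsl_bdd (j : ℕ) : IsSemilinear (Xs j) ∧ IsBoundedSet (Xs j) := by
    induction j with
    | zero => exact h0 ▸ ⟨hX.1, hX.2.1⟩
    | succ j ih => exact hrec j ▸ ⟨ih.1.closure.diff ih.1, ih.2.closure.mono sdiff_subset⟩
  have hclosed2 : IsClosed (Xs 2) := by
    obtain ⟨-, -, φ, hφ⟩ := hX
    rw [hrec2, h0]
    exact (hφ.isLocallyClosed isClosed_closure).isClosed_closure_diff_self
  intro j
  refine ⟨⟨by rw [hrec, union_sdiff_cancel subset_closure], hrec j ▸ disjoint_sdiff_right⟩,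
    hrec2 j ▸ closure_diff_self_closure_diff_self_subset _,
    hrec2 j ▸ diff_closure_diff_self_closure_diff_self _, ?_⟩
  rcases j with _ | j
  · exact h0 ▸ hX
  · exact .of_isClosed (hsl_bdd _).1 (hsl_bdd _).2
      (isClosed_of_isClosed_of_le hrec hclosed2 (by omega))
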